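/- arXiv:2311.08600 — 2 statements merged into one kernel-verified Lean document; each statement's English description precedes it below -/
import Mathlib

section
/- The functions φ_1, φ_2, …, φ_m are linearly independent over ℝ as functions of a real variable: if α_1, …, α_m ∈ ℝ satisfy Σ_{k=1}^m α_k φ_k(z) = 0 for all z ∈ ℝ, then α_1 = ⋯ = α_m = 0. -/
noncomputable def phi (k : ℕ) (z : ℝ) : ℝ :=
  ∫ θ in (0:ℝ)..1, Real.exp ((1 - θ) * z) * θ ^ (k - 1) / (Nat.factorial (k - 1))

/-!
Substituting `u = θ z` gives `z ^ k * exp (-z) * φ_k z = (∫ u in 0..z, exp (-u) * u ^ (k - 1)) / (k - 1)!`,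
which tends to `Γ(k) / (k - 1)! = 1`; so `φ_k z ~ exp z / z ^ k` as `z → ∞`. If `k` is the smallest
index with `α k ≠ 0`, multiplying the vanishing combination by `z ^ k * exp (-z)` and letting
`z → ∞` kills all later terms and leaves `α k = 0`.
-/

open Filter Topology MeasureTheory Set Real
open scoped Nat

theorem Finset.eq_zero_of_eventually_sum_mul_eq_zero {α ι R : Type*} [LinearOrder ι]
    [WellFoundedLT ι] [CommSemiring R] [TopologicalSpace R] [IsTopologicalSemiring R]
    [T2Space R] {l : Filter α} [l.NeBot] {s : Finset ι} {f w : ι → α → R} {c : ι → R}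
    (hdiag : ∀ k ∈ s, Tendsto (fun x ↦ w k x * f k x) l (𝓝 1))
    (hlt : ∀ k ∈ s, ∀ j ∈ s, k < j → Tendsto (fun x ↦ w k x * f j x) l (𝓝 0))
    (h : ∀ᶠ x in l, ∑ j ∈ s, c j * f j x = 0) :
    ∀ k ∈ s, c k = 0 := by
  intro k
  induction k using WellFoundedLT.induction with
  | _ k ih =>
  intro hk
  have hterm : ∀ j ∈ s,
      Tendsto (fun x ↦ c j * (w k x * f j x)) l (𝓝 (if k = j then c k else 0)) := by
    intro j hj
    rcases lt_trichotomy j k with hjk | rfl | hkj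
    · simp [ih j hjk hj, hjk.ne']
    · simpa using (hdiag j hj).const_mul (c j)
    · simpa [hkj.ne] using (hlt k hk j hj hkj).const_mul (c j)
  have hsum := tendsto_finsetSum s hterm
  rw [Finset.sum_ite_eq s k, if_pos hk] at hsum
  refine tendsto_nhds_unique_of_eventuallyEq hsum tendsto_const_nhds ?_
  filter_upwards [h] with x hx
  calc ∑ j ∈ s, c j * (w k x * f j x) = w k x * ∑ j ∈ s, c j * f j x := by
        rw [Finset.mul_sum]; congr! 1 with j; ring
    _ = 0 := by rw [hx, mul_zero]

theorem integrableOn_exp_neg_mul_pow_Ioi (n : ℕ) :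
    IntegrableOn (fun u ↦ exp (-u) * u ^ n) (Ioi 0) := by
  simpa [← Real.rpow_natCast] using Real.GammaIntegral_convergent (s := n + 1) (by positivity)

theorem integral_exp_neg_mul_pow_Ioi (n : ℕ) : ∫ u in Ioi 0, exp (-u) * u ^ n = n ! := by
  simpa [← Real.rpow_natCast, Real.Gamma_nat_eq_factorial] using
    (Real.Gamma_eq_integral (s := n + 1) (by positivity)).symm

theorem pow_mul_exp_neg_mul_phi_succ (n : ℕ) (z : ℝ) :
    z ^ (n + 1) * exp (-z) * phi (n + 1) z = (∫ u in 0..z, exp (-u) * u ^ n) / n ! := by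
  have hsub := intervalIntegral.smul_integral_comp_mul_right (a := 0) (b := 1)
    (fun u ↦ exp (-u) * u ^ n) z
  rw [zero_mul, one_mul] at hsub
  rw [← hsub, smul_eq_mul, phi, ← intervalIntegral.integral_const_mul,
    ← intervalIntegral.integral_const_mul, ← intervalIntegral.integral_div]
  refine intervalIntegral.integral_congr fun θ _ ↦ ?_
  have hexp : exp (-z) * exp ((1 - θ) * z) = exp (-(θ * z)) := by rw [← exp_add]; ring_nf
  simp only [Nat.add_sub_cancel]
  linear_combination (z ^ (n + 1) * θ ^ n / n !) * hexp

theorem tendsto_pow_mul_exp_neg_mul_phi_succ (n : ℕ) :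
    Tendsto (fun z ↦ z ^ (n + 1) * exp (-z) * phi (n + 1) z) atTop (𝓝 1) := by
  have hlim := (intervalIntegral_tendsto_integral_Ioi 0
    (integrableOn_exp_neg_mul_pow_Ioi n) tendsto_id).div_const (n ! : ℝ)
  rw [integral_exp_neg_mul_pow_Ioi, div_self (by positivity)] at hlim
  simpa only [pow_mul_exp_neg_mul_phi_succ, id] using hlim

theorem tendsto_pow_mul_exp_neg_mul_phi_of_lt {k j : ℕ} (hkj : k < j) :
    Tendsto (fun z ↦ z ^ k * exp (-z) * phi j z) atTop (𝓝 0) := by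
  obtain ⟨n, rfl⟩ : ∃ n, j = n + 1 := ⟨j - 1, by omega⟩
  have hlim := (tendsto_pow_atTop (n := n + 1 - k) (by omega)).inv_tendsto_atTop.mul
    (tendsto_pow_mul_exp_neg_mul_phi_succ n)
  rw [zero_mul] at hlim
  refine hlim.congr' ?_
  filter_upwards [eventually_ne_atTop 0] with z hz
  rw [Pi.inv_apply, ← pow_sub_mul_pow z hkj.le]
  field_simp

theorem phi_linearly_independent (m : ℕ) (α : ℕ → ℝ)
    (h : ∀ z : ℝ, ∑ k ∈ Finset.Icc 1 m, α k * phi k z = 0) :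
    ∀ k ∈ Finset.Icc 1 m, α k = 0 := by
  refine Finset.eq_zero_of_eventually_sum_mul_eq_zero (l := atTop)
    (w := fun k z ↦ z ^ k * exp (-z))
    (fun k hk ↦ ?_) (fun k _ j _ hkj ↦ ?_) (Eventually.of_forall h)
  · obtain ⟨n, rfl⟩ : ∃ n, k = n + 1 := ⟨k - 1, by grind⟩
    exact tendsto_pow_mul_exp_neg_mul_phi_succ n
  · exact tendsto_pow_mul_exp_neg_mul_phi_of_lt hkj
end

section
/- Let c₁, c₂, c₃, c₄ be distinct nonzero reals and fix z ∈ ℝ. Define, for each i ∈ {1,2,3,4} with {j,k,l} = {1,2,3,4}\{i}, b_i = [−c_j c_k c_l φ_2(z) + 2(c_j c_k + c_j c_l + c_k c_l) φ_3(z) − 6(c_j + c_k + c_l) φ_4(z) + 24 φ_5(z)] / [c_i (c_i − c_j)(c_i − c_k)(c_i − c_l)]. Then Σ_{i=1}^{4} b_i c_i^{q−1}/(q−1)! = φ_q(z) for q = 2, 3, 4, 5. -/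
/-- The weight formula (4.3): for node `ci` with complementary nodes `cj, ck, cl`. -/
noncomputable def weight (z ci cj ck cl : ℝ) : ℝ :=
  (-(cj * ck * cl) * phi 2 z + 2 * (cj * ck + cj * cl + ck * cl) * phi 3 z
    - 6 * (cj + ck + cl) * phi 4 z + 24 * phi 5 z) /
  (ci * (ci - cj) * (ci - ck) * (ci - cl))

noncomputable def stiffWeight (p : ℕ → ℝ) (ci cj ck cl : ℝ) : ℝ :=
  (-(cj * ck * cl) * p 2 + 2 * (cj * ck + cj * cl + ck * cl) * p 3
    - 6 * (cj + ck + cl) * p 4 + 24 * p 5) /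
  (ci * (ci - cj) * (ci - ck) * (ci - cl))

theorem stiffWeight_solve_order_conditions (p : ℕ → ℝ) {c1 c2 c3 c4 : ℝ}
    (hc1 : c1 ≠ 0) (hc2 : c2 ≠ 0) (hc3 : c3 ≠ 0) (hc4 : c4 ≠ 0)
    (h12 : c1 ≠ c2) (h13 : c1 ≠ c3) (h14 : c1 ≠ c4)
    (h23 : c2 ≠ c3) (h24 : c2 ≠ c4) (h34 : c3 ≠ c4) {q : ℕ} (hq : q ∈ ({2, 3, 4, 5} : Finset ℕ)) :
    stiffWeight p c1 c2 c3 c4 * c1 ^ (q - 1) / (q - 1).factorial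
      + stiffWeight p c2 c1 c3 c4 * c2 ^ (q - 1) / (q - 1).factorial
      + stiffWeight p c3 c1 c2 c4 * c3 ^ (q - 1) / (q - 1).factorial
      + stiffWeight p c4 c1 c2 c3 * c4 ^ (q - 1) / (q - 1).factorial
      = p q := by
  simp only [stiffWeight]
  fin_cases hq <;>
  · norm_num [Nat.factorial]
    field_simp
    ring

theorem weights_solve_order_conditions (z c1 c2 c3 c4 : ℝ)
    (hc1 : c1 ≠ 0) (hc2 : c2 ≠ 0) (hc3 : c3 ≠ 0) (hc4 : c4 ≠ 0)
    (h12 : c1 ≠ c2) (h13 : c1 ≠ c3) (h14 : c1 ≠ c4)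
    (h23 : c2 ≠ c3) (h24 : c2 ≠ c4) (h34 : c3 ≠ c4) :
    ∀ q ∈ ({2, 3, 4, 5} : Finset ℕ),
      weight z c1 c2 c3 c4 * c1 ^ (q - 1) / (Nat.factorial (q - 1))
      + weight z c2 c1 c3 c4 * c2 ^ (q - 1) / (Nat.factorial (q - 1))
      + weight z c3 c1 c2 c4 * c3 ^ (q - 1) / (Nat.factorial (q - 1))
      + weight z c4 c1 c2 c3 * c4 ^ (q - 1) / (Nat.factorial (q - 1))
      = phi q z :=
  fun _ hq => stiffWeight_solve_order_conditions (fun q => phi q z)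
    hc1 hc2 hc3 hc4 h12 h13 h14 h23 h24 h34 hq
end
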